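/- For an LPMLN program P, a set U of literals with lit(P) ⊆ U, and a flattening extension E^{k+1}(P,U) = E^k(P,U) ∪ R(X ∩ U, U − X, c_{k+1}) built from a probabilistic stable model X of E^k(P,U) and a fresh atom c_{k+1}: (1) SM(E^0(P,U)) is exactly the set of consistent subsets of U; (2) SM(E^{k+1}(P,U)) = SM(E^k(P,U)) ∪ {Y ∪ {c_{k+1}} | Y ∈ SM(E^k(P,U)) and Y ∩ U = X ∩ U}; (3) W(E^{k+1}(P,U), Y) equals W(E^k(P,U), Y)·e^{2α} if Y ∩ U ≠ X ∩ U and equals W(E^k(P,U), Y)·e^{α} otherwise; and for any two stable models Y, Z of E^i(P,U) with i > 0, if Y ∩ U = Z ∩ U then W(E^i(P,U), Y) = W(E^i(P,U), Z). -/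

import Mathlib

open scoped Classical

noncomputable section

namespace LPMLN

/-- A ground literal: an atom (numbered by `ℕ`) or its classical negation. -/
inductive Lit where
  | pos : ℕ → Lit
  | neg : ℕ → Lit
deriving DecidableEq

/-- The complementary literal. -/
def Lit.compl : Lit → Lit
  | .pos a => .neg a
  | .neg a => .pos a

/-- A finite set of literals is consistent if it contains no complementary pair. -/
def Consistent (I : Finset Lit) : Prop := ∀ l ∈ I, l.compl ∉ I

/-- An ASP rule, given by its head, positive body and negative body. -/
structure Rule where
  head : Finset Lit
  pos : Finset Lit
  neg : Finset Lit
deriving DecidableEq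

/-- The literals occurring in a rule. -/
def Rule.lits (r : Rule) : Finset Lit := r.head ∪ r.pos ∪ r.neg

/-- Satisfaction of a rule by a set of literals. -/
def Sat (I : Finset Lit) (r : Rule) : Prop :=
  r.pos ⊆ I → r.neg ∩ I = ∅ → (r.head ∩ I).Nonempty

/-- Satisfaction of an ASP program. -/
def SatProg (I : Finset Lit) (prog : Finset Rule) : Prop := ∀ r ∈ prog, Sat I r

/-- The GL-reduct of an ASP program w.r.t. an interpretation. -/
def glReduct (prog : Finset Rule) (I : Finset Lit) : Finset Rule :=
  (prog.filter fun r => r.neg ∩ I = ∅).image fun r => ⟨r.head, r.pos, ∅⟩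

/-- `I` is a stable model of the ASP program `prog`: `I` is a consistent set of
literals satisfying the GL-reduct, no proper subset of which satisfies the GL-reduct. -/
def AspStable (prog : Finset Rule) (I : Finset Lit) : Prop :=
  Consistent I ∧ SatProg I (glReduct prog I) ∧ ∀ J ⊂ I, ¬ SatProg J (glReduct prog I)

/-- A weight: a real number (soft rule) or the symbol `α` (hard rule). -/
inductive Weight where
  | soft : ℝ → Weight
  | hard : Weight

/-- The real value of a soft weight (hard weights get the dummy value 0). -/
def Weight.val : Weight → ℝ
  | .soft w => w
  | .hard => 0

/-- A weighted rule `w : r`. -/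
structure WRule where
  w : Weight
  r : Rule

/-- An LPMLN program: a finite set of weighted rules. -/
abbrev Program := Finset WRule

/-- The LPMLN reduct `P_I`: the rules of `P` satisfied by `I`. -/
def reduct (P : Program) (I : Finset Lit) : Program := P.filter fun wr => Sat I wr.r

/-- The unweighted ASP counterpart of an LPMLN program. -/
def unweighted (P : Program) : Finset Rule := P.image fun wr => wr.r

/-- `I` is a stable model of the LPMLN program `P`: `I` is a stable model of the
unweighted ASP counterpart of the LPMLN reduct `P_I`. -/
def Stable (P : Program) (I : Finset Lit) : Prop :=
  AspStable (unweighted (reduct P I)) I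

/-- The literals occurring in an LPMLN program. -/
def litset (P : Program) : Finset Lit := P.biUnion fun wr => wr.r.lits

/-- `(X, Y)` is an SE-interpretation: a pair of interpretations with `X ⊆ Y`. -/
def SEInterp (X Y : Finset Lit) : Prop := Consistent X ∧ Consistent Y ∧ X ⊆ Y

/-- `(X, Y)` is an SE-model of the LPMLN program `P`: an SE-interpretation such that
`X` satisfies the GL-reduct (w.r.t. `Y`) of the unweighted version of `P_Y`. -/
def SEModel (P : Program) (X Y : Finset Lit) : Prop :=
  SEInterp X Y ∧ SatProg X (glReduct (unweighted (reduct P Y)) Y)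

/-- The number of hard rules of `P` satisfied by `I`. -/
def hardCount (P : Program) (I : Finset Lit) : ℕ :=
  ((reduct P I).filter fun wr => wr.w = Weight.hard).card

/-- The sum of the weights of the soft rules of `P` satisfied by `I`. -/
def softWeight (P : Program) (I : Finset Lit) : ℝ :=
  ∑ wr ∈ ((reduct P I).filter fun wr => wr.w ≠ Weight.hard), wr.w.val

/-- The weight degree `W(P, I) = exp(Σ_{w:r ∈ P_I} w)`, viewed as the real-valued
function `A ↦ exp(c' + k'·A)` of the value `A` given to the symbol `α`, where `k'` is
the number of hard rules of `P` satisfied by `I` and `c'` the sum of the weights of the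
soft rules of `P` satisfied by `I`. -/
def wdeg (P : Program) (I : Finset Lit) (A : ℝ) : ℝ :=
  Real.exp (softWeight P I + A * hardCount P I)

/-- The (finite) set of stable models of `P` (every stable model of `P` is a subset of
`litset P`). -/
def SMset (P : Program) : Finset (Finset Lit) :=
  (litset P).powerset.filter fun I => Stable P I

/-- The probability degree `Pr(P, I)`: the limit, as `α → ∞`, of
`W(P, I) / Σ_{I' ∈ SM(P)} W(P, I')` if `I` is a stable model of `P`, and `0` otherwise. -/
def PrDeg (P : Program) (I : Finset Lit) : ℝ :=
  if Stable P I then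
    Filter.limUnder Filter.atTop fun A => wdeg P I A / ∑ I' ∈ SMset P, wdeg P I' A
  else 0

/-- `I` is a probabilistic stable model of `P`: a stable model of `P` satisfying the
maximum number of hard rules of `P` (equivalently, with nonzero probability degree). -/
def PStable (P : Program) (I : Finset Lit) : Prop :=
  Stable P I ∧ ∀ J, Stable P J → hardCount P J ≤ hardCount P I

/-- Semi-strong equivalence: the extensions by any LPMLN program have the same
stable models. -/
def SemiStrongEq (P Q : Program) : Prop :=
  ∀ R : Program, ∀ I, Stable (P ∪ R) I ↔ Stable (Q ∪ R) I

/-- p-ordinary equivalence: same stable models and same probability degrees. -/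
def POrdEq (P Q : Program) : Prop :=
  (∀ I, Stable P I ↔ Stable Q I) ∧ ∀ I, Stable P I → PrDeg P I = PrDeg Q I

/-- p-strong equivalence: p-ordinary equivalence under every extension. -/
def PStrongEq (P Q : Program) : Prop := ∀ R : Program, POrdEq (P ∪ R) (Q ∪ R)

/-- Comparison of the symbolic weight degrees of two interpretations w.r.t. `P`:
`exp(c + k·α) ≤ exp(c' + k'·α)` iff `k < k'`, or `k = k'` and `c ≤ c'`. -/
def WLe (P : Program) (I J : Finset Lit) : Prop :=
  hardCount P I < hardCount P J ∨
    (hardCount P I = hardCount P J ∧ softWeight P I ≤ softWeight P J)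

/-- q-strong equivalence: same stable models under every extension, with
order-preserving weight degrees. -/
def QStrongEq (P Q : Program) : Prop :=
  ∀ R : Program,
    (∀ I, Stable (P ∪ R) I ↔ Stable (Q ∪ R) I) ∧
    ∀ X Y, Stable (P ∪ R) X → Stable (P ∪ R) Y → (WLe (P ∪ R) X Y ↔ WLe (Q ∪ R) X Y)

/-- A soft stable model of `P`: a stable model of `P` satisfying all hard rules of `P`. -/
def SoftStable (P : Program) (I : Finset Lit) : Prop :=
  Stable P I ∧ ∀ wr ∈ P, wr.w = Weight.hard → Sat I wr.r

/-- A soft SE-model of `P`: an SE-model `(X, Y)` of `P` such that `Y` satisfies all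
hard rules of `P`. -/
def SoftSEModel (P : Program) (X Y : Finset Lit) : Prop :=
  SEModel P X Y ∧ ∀ wr ∈ P, wr.w = Weight.hard → Sat Y wr.r

/-- The (finite) set of soft stable models of `P`. -/
def SSMset (P : Program) : Finset (Finset Lit) :=
  (litset P).powerset.filter fun I => SoftStable P I

/-- The probability degree under the soft stable model semantics:
`Pr_s(P, X) = W_s(P, X) / Σ_{X' ∈ SSM(P)} W_s(P, X')`, where
`W_s(P, X) = exp(Σ_{w:r ∈ P^s, X ⊨ r} w)`. -/
def PrS (P : Program) (X : Finset Lit) : ℝ :=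
  Real.exp (softWeight P X) / ∑ X' ∈ SSMset P, Real.exp (softWeight P X')

/-- sp-strong equivalence: p-strong equivalence under the soft stable model
semantics. -/
def SPStrongEq (P Q : Program) : Prop :=
  ∀ R : Program,
    (∀ I, SoftStable (P ∪ R) I ↔ SoftStable (Q ∪ R) I) ∧
    ∀ X, SoftStable (P ∪ R) X → PrS (P ∪ R) X = PrS (Q ∪ R) X

/-- `(X, Y)` is a UE-model of `P`: an SE-model with `X = Y`, or with `X ⊊ Y` such that
no `X'` strictly between `X` and `Y` gives an SE-model `(X', Y)`. -/
def UEModel (P : Program) (X Y : Finset Lit) : Prop :=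
  SEModel P X Y ∧
    (X = Y ∨ (X ⊂ Y ∧ ∀ X', X ⊂ X' → X' ⊂ Y → ¬ SEModel P X' Y))

/-- A program consisting of weighted facts only (rules with empty bodies). -/
def IsFactProg (R : Program) : Prop := ∀ wr ∈ R, wr.r.pos = ∅ ∧ wr.r.neg = ∅

/-- p-uniform equivalence: p-ordinary equivalence under every extension by a set of
weighted facts. -/
def PUniformEq (P Q : Program) : Prop :=
  ∀ R : Program, IsFactProg R → POrdEq (P ∪ R) (Q ∪ R)

/-- The flattening rules `R(X, Y, a)`: the two hard rules
`α : ← X, not Y, a` and `α : a ← X, not Y`. -/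
def flatten (X Y : Finset Lit) (a : ℕ) : Program :=
  {⟨Weight.hard, ⟨∅, X ∪ {Lit.pos a}, Y⟩⟩, ⟨Weight.hard, ⟨{Lit.pos a}, X, Y⟩⟩}

/-- The hard fact `α : l`. -/
def factOf (l : Lit) : WRule := ⟨Weight.hard, ⟨{l}, ∅, ∅⟩⟩

/-- The base flattening extension `E⁰(P, U) = P ∪ {α : a | a ∈ U}`. -/
def E0 (P : Program) (U : Finset Lit) : Program := P ∪ U.image factOf

/-- `IsFlatExt P U k E` holds iff `E` is a flattening extension `E^k(P, U)`:
`E⁰(P, U) = P ∪ {α : a | a ∈ U}` and `E^{i+1}(P, U) = E^i(P, U) ∪ R(X ∩ U, U − X, c)`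
where `X` is a probabilistic stable model of `E^i(P, U)` and `c` is a fresh atom. -/
inductive IsFlatExt (P : Program) (U : Finset Lit) : ℕ → Program → Prop
  | zero : IsFlatExt P U 0 (E0 P U)
  | succ {i : ℕ} {E : Program} {X : Finset Lit} {c : ℕ} :
      IsFlatExt P U i E → PStable E X →
      Lit.pos c ∉ litset E → Lit.neg c ∉ litset E →
      IsFlatExt P U (i + 1) (E ∪ flatten (X ∩ U) (U \ X) c)

/-! ### Auxiliary lemmas -/

lemma lits_subset_litset {P : Program} {wr : WRule} (h : wr ∈ P) : wr.r.lits ⊆ litset P :=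
  Finset.subset_biUnion_of_mem (fun wr => wr.r.lits) h

lemma head_subset_lits (r : Rule) : r.head ⊆ r.lits := by
  intro l hl; simp [Rule.lits, hl]

lemma pos_subset_lits (r : Rule) : r.pos ⊆ r.lits := by
  intro l hl; simp [Rule.lits, hl]

lemma neg_subset_lits (r : Rule) : r.neg ⊆ r.lits := by
  intro l hl; simp [Rule.lits, hl]

lemma litset_union (P Q : Program) : litset (P ∪ Q) = litset P ∪ litset Q := by
  ext l
  simp only [litset, Finset.mem_biUnion, Finset.mem_union]
  constructor
  · rintro ⟨wr, hwr | hwr, hl⟩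
    exacts [Or.inl ⟨wr, hwr, hl⟩, Or.inr ⟨wr, hwr, hl⟩]
  · rintro (⟨wr, hwr, hl⟩ | ⟨wr, hwr, hl⟩)
    exacts [⟨wr, Or.inl hwr, hl⟩, ⟨wr, Or.inr hwr, hl⟩]

lemma mem_reduct {P : Program} {I : Finset Lit} {wr : WRule} :
    wr ∈ reduct P I ↔ wr ∈ P ∧ Sat I wr.r := Finset.mem_filter

lemma mem_unweighted {Q : Finset WRule} {r : Rule} :
    r ∈ unweighted Q ↔ ∃ wr ∈ Q, wr.r = r := by
  simp [unweighted]

lemma mem_glReduct {prog : Finset Rule} {I : Finset Lit} {r' : Rule} :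
    r' ∈ glReduct prog I ↔ ∃ r ∈ prog, r.neg ∩ I = ∅ ∧ r' = ⟨r.head, r.pos, ∅⟩ := by
  simp only [glReduct, Finset.mem_image, Finset.mem_filter]
  constructor
  · rintro ⟨r, ⟨hr, hneg⟩, rfl⟩; exact ⟨r, hr, hneg, rfl⟩
  · rintro ⟨r, hr, hneg, rfl⟩; exact ⟨r, ⟨hr, hneg⟩, rfl⟩

lemma mem_gl {Q : Program} {I : Finset Lit} {r' : Rule} :
    r' ∈ glReduct (unweighted (reduct Q I)) I ↔
      ∃ wr ∈ Q, Sat I wr.r ∧ wr.r.neg ∩ I = ∅ ∧ r' = ⟨wr.r.head, wr.r.pos, ∅⟩ := by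
  rw [mem_glReduct]
  constructor
  · rintro ⟨r, hr, hneg, rfl⟩
    obtain ⟨wr, hwr, rfl⟩ := mem_unweighted.1 hr
    exact ⟨wr, (mem_reduct.1 hwr).1, (mem_reduct.1 hwr).2, hneg, rfl⟩
  · rintro ⟨wr, hwr, hsat, hneg, rfl⟩
    exact ⟨wr.r, mem_unweighted.2 ⟨wr, mem_reduct.2 ⟨hwr, hsat⟩, rfl⟩, hneg, rfl⟩

lemma sat_congr {Y Z : Finset Lit} {r : Rule} (h : ∀ l ∈ r.lits, (l ∈ Y ↔ l ∈ Z)) :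
    Sat Y r ↔ Sat Z r := by
  have e1 : r.pos ⊆ Y ↔ r.pos ⊆ Z :=
    ⟨fun hs l hl => (h l (pos_subset_lits r hl)).1 (hs hl),
     fun hs l hl => (h l (pos_subset_lits r hl)).2 (hs hl)⟩
  have e2 : r.neg ∩ Y = r.neg ∩ Z := by
    ext l; simp only [Finset.mem_inter]
    exact and_congr_right fun hl => h l (neg_subset_lits r hl)
  have e3 : r.head ∩ Y = r.head ∩ Z := by
    ext l; simp only [Finset.mem_inter]
    exact and_congr_right fun hl => h l (head_subset_lits r hl)
  unfold Sat; rw [e1, e2, e3]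

lemma reduct_congr {P : Program} {Y Z : Finset Lit} (h : ∀ l ∈ litset P, (l ∈ Y ↔ l ∈ Z)) :
    reduct P Y = reduct P Z := by
  unfold reduct
  apply Finset.filter_congr
  intro wr hwr
  exact sat_congr fun l hl => h l (lits_subset_litset hwr hl)

lemma gl_congr {E : Program} {Y Z : Finset Lit} (h : ∀ l ∈ litset E, (l ∈ Y ↔ l ∈ Z)) :
    glReduct (unweighted (reduct E Y)) Y = glReduct (unweighted (reduct E Z)) Z := by
  have hred : reduct E Y = reduct E Z := reduct_congr h
  have hlit : ∀ r ∈ unweighted (reduct E Z), r.neg ∩ Y = r.neg ∩ Z := by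
    intro r hr
    obtain ⟨wr, hwr, rfl⟩ := mem_unweighted.1 hr
    ext l; simp only [Finset.mem_inter]
    exact and_congr_right fun hl =>
      h l (lits_subset_litset (mem_reduct.1 hwr).1 (neg_subset_lits _ hl))
  ext r'
  rw [mem_glReduct, hred, mem_glReduct]
  constructor <;> rintro ⟨r, hr, hneg, rfl⟩ <;> refine ⟨r, hr, ?_, rfl⟩
  · rw [← hlit r hr]; exact hneg
  · rw [hlit r hr]; exact hneg

lemma gl_union (Q R : Program) (I : Finset Lit) :
    glReduct (unweighted (reduct (Q ∪ R) I)) I =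
      glReduct (unweighted (reduct Q I)) I ∪ glReduct (unweighted (reduct R I)) I := by
  ext r'; rw [mem_gl, Finset.mem_union, mem_gl, mem_gl]
  constructor
  · rintro ⟨wr, hwr, rest⟩
    rcases Finset.mem_union.1 hwr with h | h
    · exact Or.inl ⟨wr, h, rest⟩
    · exact Or.inr ⟨wr, h, rest⟩
  · rintro (⟨wr, hwr, rest⟩ | ⟨wr, hwr, rest⟩)
    · exact ⟨wr, Finset.mem_union_left _ hwr, rest⟩
    · exact ⟨wr, Finset.mem_union_right _ hwr, rest⟩

lemma consistent_of_subset {I J : Finset Lit} (h : J ⊆ I) (hI : Consistent I) : Consistent J :=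
  fun l hl hc => hI l (h hl) (h hc)

lemma satProg_glReduct_self {P : Program} {I : Finset Lit} :
    SatProg I (glReduct (unweighted (reduct P I)) I) := by
  intro r' hr'
  obtain ⟨wr, _, hsat, hneg, rfl⟩ := mem_gl.1 hr'
  intro hpos _
  exact hsat hpos hneg

lemma stable_subset_litset {E : Program} {I : Finset Lit} (h : Stable E I) : I ⊆ litset E := by
  intro l hl
  by_contra hnl
  refine h.2.2 (I.erase l) (Finset.erase_ssubset hl) ?_
  intro r' hr'
  obtain ⟨wr, hwr, hsat, hneg, rfl⟩ := mem_gl.1 hr'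
  intro hpos _
  have hpos' : wr.r.pos ⊆ I := fun x hx => Finset.mem_of_mem_erase (hpos hx)
  obtain ⟨x, hx⟩ := hsat hpos' hneg
  refine ⟨x, Finset.mem_inter.2 ⟨(Finset.mem_inter.1 hx).1, Finset.mem_erase.2 ⟨?_, (Finset.mem_inter.1 hx).2⟩⟩⟩
  rintro rfl
  exact hnl (lits_subset_litset hwr (head_subset_lits _ (Finset.mem_inter.1 hx).1))

lemma litset_E0_supset (P : Program) (U : Finset Lit) : U ⊆ litset (E0 P U) := by
  intro l hl
  have hf : factOf l ∈ E0 P U :=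
    Finset.mem_union_right _ (Finset.mem_image_of_mem _ hl)
  exact lits_subset_litset hf (by simp [factOf, Rule.lits])

lemma litset_E0_subset {P : Program} {U : Finset Lit} (hPU : litset P ⊆ U) :
    litset (E0 P U) ⊆ U := by
  unfold E0
  rw [litset_union]
  intro l hl
  rcases Finset.mem_union.1 hl with h | h
  · exact hPU h
  · obtain ⟨wr, hwr, hlw⟩ := Finset.mem_biUnion.1 h
    obtain ⟨a, ha, rfl⟩ := Finset.mem_image.1 hwr
    simp [factOf, Rule.lits] at hlw
    rwa [hlw]

lemma U_subset_litset {P : Program} {U : Finset Lit} {i : ℕ} {E : Program}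
    (h : IsFlatExt P U i E) : U ⊆ litset E := by
  induction h with
  | zero => exact litset_E0_supset P U
  | succ _ _ _ _ ih => rw [litset_union]; exact ih.trans Finset.subset_union_left

/-- The first flattening rule. -/
def fwr1 (A B : Finset Lit) (c : ℕ) : WRule := ⟨Weight.hard, ⟨∅, A ∪ {Lit.pos c}, B⟩⟩

/-- The second flattening rule. -/
def fwr2 (A B : Finset Lit) (c : ℕ) : WRule := ⟨Weight.hard, ⟨{Lit.pos c}, A, B⟩⟩

lemma flatten_eq (A B : Finset Lit) (c : ℕ) : flatten A B c = {fwr1 A B c, fwr2 A B c} := rfl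

lemma fwr1_ne_fwr2 (A B : Finset Lit) (c : ℕ) : fwr1 A B c ≠ fwr2 A B c := by
  intro h
  have : (∅ : Finset Lit) = {Lit.pos c} := congrArg (fun w => w.r.head) h
  exact Finset.singleton_ne_empty _ this.symm

lemma key_inter {X U Y : Finset Lit} :
    (X ∩ U ⊆ Y ∧ (U \ X) ∩ Y = ∅) ↔ Y ∩ U = X ∩ U := by
  constructor
  · rintro ⟨h1, h2⟩
    ext l
    simp only [Finset.mem_inter]
    constructor
    · rintro ⟨hY, hU⟩
      refine ⟨?_, hU⟩
      by_contra hX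
      have hm : l ∈ (U \ X) ∩ Y := Finset.mem_inter.2 ⟨Finset.mem_sdiff.2 ⟨hU, hX⟩, hY⟩
      rw [h2] at hm
      exact absurd hm (Finset.notMem_empty l)
    · rintro ⟨hX, hU⟩
      exact ⟨h1 (Finset.mem_inter.2 ⟨hX, hU⟩), hU⟩
  · intro h
    constructor
    · rw [← h]; exact Finset.inter_subset_left
    · ext l
      simp only [Finset.mem_inter, Finset.mem_sdiff, Finset.notMem_empty, iff_false, not_and]
      rintro ⟨hU, hX⟩ hY
      have hm : l ∈ Y ∩ U := Finset.mem_inter.2 ⟨hY, hU⟩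
      rw [h] at hm
      exact hX (Finset.mem_inter.1 hm).1

lemma sat_fwr1_iff {X U Y : Finset Lit} {c : ℕ} :
    Sat Y (fwr1 (X ∩ U) (U \ X) c).r ↔ ¬(Y ∩ U = X ∩ U ∧ Lit.pos c ∈ Y) := by
  unfold Sat fwr1
  simp only [Finset.empty_inter]
  constructor
  · intro hs ⟨hYX, hc⟩
    have h1 : X ∩ U ⊆ Y ∧ (U \ X) ∩ Y = ∅ := key_inter.2 hYX
    have hpos : X ∩ U ∪ {Lit.pos c} ⊆ Y := by
      intro l hl
      rcases Finset.mem_union.1 hl with h | h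
      · exact h1.1 h
      · rw [Finset.mem_singleton.1 h]; exact hc
    obtain ⟨x, hx⟩ := hs hpos h1.2
    exact absurd hx (Finset.notMem_empty x)
  · intro h hpos hneg
    exfalso
    apply h
    have hsub : X ∩ U ⊆ Y := fun l hl => hpos (Finset.mem_union_left _ hl)
    exact ⟨key_inter.1 ⟨hsub, hneg⟩, hpos (Finset.mem_union_right _ (Finset.mem_singleton_self _))⟩

lemma sat_fwr2_iff {X U Y : Finset Lit} {c : ℕ} :
    Sat Y (fwr2 (X ∩ U) (U \ X) c).r ↔ (Y ∩ U = X ∩ U → Lit.pos c ∈ Y) := by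
  unfold Sat fwr2
  constructor
  · intro hs hYX
    have h1 := key_inter.2 hYX
    obtain ⟨x, hx⟩ := hs h1.1 h1.2
    obtain ⟨hx1, hx2⟩ := Finset.mem_inter.1 hx
    rwa [← Finset.mem_singleton.1 hx1]
  · intro h hpos hneg
    have hc := h (key_inter.1 ⟨hpos, hneg⟩)
    exact ⟨Lit.pos c, Finset.mem_inter.2 ⟨Finset.mem_singleton_self _, hc⟩⟩

lemma reduct_flatten_ne {X U Y : Finset Lit} {c : ℕ} (h : Y ∩ U ≠ X ∩ U) :
    reduct (flatten (X ∩ U) (U \ X) c) Y = flatten (X ∩ U) (U \ X) c := by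
  apply Finset.filter_true_of_mem
  intro wr hwr
  rw [flatten_eq] at hwr
  rcases Finset.mem_insert.1 hwr with rfl | hwr
  · exact sat_fwr1_iff.2 fun hx => h hx.1
  · rw [Finset.mem_singleton.1 hwr]
    exact sat_fwr2_iff.2 fun hx => absurd hx h

lemma reduct_flatten_eq {X U Y : Finset Lit} {c : ℕ} (h : Y ∩ U = X ∩ U) :
    reduct (flatten (X ∩ U) (U \ X) c) Y =
      if Lit.pos c ∈ Y then {fwr2 (X ∩ U) (U \ X) c} else {fwr1 (X ∩ U) (U \ X) c} := by
  unfold reduct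
  rw [flatten_eq]
  by_cases hc : Lit.pos c ∈ Y <;> simp only [hc, if_true, if_false]
  · rw [Finset.filter_insert, if_neg (by rw [sat_fwr1_iff]; push_neg; exact ⟨h, hc⟩),
      Finset.filter_singleton, if_pos (sat_fwr2_iff.2 fun _ => hc)]
  · rw [Finset.filter_insert, if_pos (sat_fwr1_iff.2 fun hx => hc hx.2),
      Finset.filter_singleton, if_neg (by rw [sat_fwr2_iff]; push_neg; exact ⟨h, hc⟩)]
    rfl

lemma flatten_disjoint {E : Program} {X U : Finset Lit} {c : ℕ}
    (hc1 : Lit.pos c ∉ litset E) : Disjoint E (flatten (X ∩ U) (U \ X) c) := by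
  rw [Finset.disjoint_right]
  intro wr hwr hwe
  apply hc1
  apply lits_subset_litset hwe
  rw [flatten_eq] at hwr
  rcases Finset.mem_insert.1 hwr with rfl | hwr
  · simp [fwr1, Rule.lits]
  · rw [Finset.mem_singleton.1 hwr]; simp [fwr2, Rule.lits]

lemma count_flatten {E : Program} {X U Y : Finset Lit} {c : ℕ}
    (hc1 : Lit.pos c ∉ litset E) :
    hardCount (E ∪ flatten (X ∩ U) (U \ X) c) Y
      = hardCount E Y + (if Y ∩ U = X ∩ U then 1 else 2) ∧
    softWeight (E ∪ flatten (X ∩ U) (U \ X) c) Y = softWeight E Y := by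
  have hred : reduct (E ∪ flatten (X ∩ U) (U \ X) c) Y
      = reduct E Y ∪ reduct (flatten (X ∩ U) (U \ X) c) Y := Finset.filter_union _ _ _
  have hflhard : ∀ wr ∈ reduct (flatten (X ∩ U) (U \ X) c) Y, wr.w = Weight.hard := by
    intro wr hwr
    have := (mem_reduct.1 hwr).1
    rw [flatten_eq] at this
    rcases Finset.mem_insert.1 this with rfl | h
    · rfl
    · rw [Finset.mem_singleton.1 h]; rfl
  constructor
  · unfold hardCount
    rw [hred, Finset.filter_union]
    rw [Finset.card_union_of_disjoint]
    · congr 1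
      rw [Finset.filter_true_of_mem hflhard]
      by_cases h : Y ∩ U = X ∩ U
      · rw [if_pos h, reduct_flatten_eq h]
        by_cases hc : Lit.pos c ∈ Y <;> simp [hc]
      · rw [if_neg h, reduct_flatten_ne h, flatten_eq,
          Finset.card_insert_of_notMem (by simp [fwr1_ne_fwr2]), Finset.card_singleton]
    · exact Finset.disjoint_filter_filter
        (Finset.disjoint_filter_filter (flatten_disjoint hc1))
  · unfold softWeight
    rw [hred, Finset.filter_union]
    have : (reduct (flatten (X ∩ U) (U \ X) c) Y).filter (fun wr => wr.w ≠ Weight.hard) = ∅ := by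
      rw [Finset.filter_eq_empty_iff]
      intro wr hwr h
      exact h (hflhard wr hwr)
    rw [this, Finset.union_empty]

lemma stable_E0 {P : Program} {U : Finset Lit} (hPU : litset P ⊆ U) (I : Finset Lit) :
    Stable (E0 P U) I ↔ Consistent I ∧ I ⊆ U := by
  constructor
  · rintro ⟨hcons, hsat, hmin⟩
    refine ⟨hcons, ?_⟩
    by_contra hIU
    have hss : I ∩ U ⊂ I := by
      refine Finset.ssubset_iff_subset_ne.2 ⟨Finset.inter_subset_left, ?_⟩
      intro h
      refine hIU fun l hl => ?_
      rw [← h] at hl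
      exact (Finset.mem_inter.1 hl).2
    refine hmin (I ∩ U) hss ?_
    intro r' hr'
    obtain ⟨wr, hwr, hws, hneg, rfl⟩ := mem_gl.1 hr'
    intro hpos _
    have hpos' : wr.r.pos ⊆ I := hpos.trans Finset.inter_subset_left
    obtain ⟨x, hx⟩ := hws hpos' hneg
    obtain ⟨hx1, hx2⟩ := Finset.mem_inter.1 hx
    have hxU : x ∈ U := litset_E0_subset hPU
      (lits_subset_litset hwr (head_subset_lits _ hx1))
    exact ⟨x, Finset.mem_inter.2 ⟨hx1, Finset.mem_inter.2 ⟨hx2, hxU⟩⟩⟩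
  · rintro ⟨hcons, hIU⟩
    refine ⟨hcons, satProg_glReduct_self, ?_⟩
    intro J hJ hJsat
    obtain ⟨l, hlI, hlJ⟩ := Finset.exists_of_ssubset hJ
    have hmem : (⟨{l}, ∅, ∅⟩ : Rule) ∈ glReduct (unweighted (reduct (E0 P U) I)) I := by
      refine mem_gl.2 ⟨factOf l, ?_, ?_, ?_, rfl⟩
      · exact Finset.mem_union_right _ (Finset.mem_image_of_mem _ (hIU hlI))
      · intro _ _
        exact ⟨l, Finset.mem_inter.2 ⟨Finset.mem_singleton_self _, hlI⟩⟩
      · simp [factOf]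
    obtain ⟨x, hx⟩ := hJsat _ hmem (by simp [factOf]) (by simp [factOf])
    obtain ⟨hx1, hx2⟩ := Finset.mem_inter.1 hx
    rw [Finset.mem_singleton.1 hx1] at hx2
    exact hlJ hx2

lemma lemB {P : Program} {U : Finset Lit} (hPU : litset P ⊆ U) {i : ℕ} {F : Program}
    (h : IsFlatExt P U i F) :
    ∀ Y Z : Finset Lit, Y ∩ U = Z ∩ U →
      hardCount F Y = hardCount F Z ∧ softWeight F Y = softWeight F Z := by
  induction h with
  | zero =>
    intro Y Z hYZ
    have hr : reduct (E0 P U) Y = reduct (E0 P U) Z := by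
      apply reduct_congr
      intro l hl
      have hlU : l ∈ U := litset_E0_subset hPU hl
      constructor
      · intro hY
        have : l ∈ Y ∩ U := Finset.mem_inter.2 ⟨hY, hlU⟩
        rw [hYZ] at this
        exact (Finset.mem_inter.1 this).1
      · intro hZ
        have : l ∈ Z ∩ U := Finset.mem_inter.2 ⟨hZ, hlU⟩
        rw [← hYZ] at this
        exact (Finset.mem_inter.1 this).1
    constructor
    · unfold hardCount; rw [hr]
    · unfold softWeight; rw [hr]
  | @succ i E X c _ _ hc1 _ ih =>
    intro Y Z hYZ
    obtain ⟨ihH, ihS⟩ := ih Y Z hYZ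
    obtain ⟨cY1, cY2⟩ := count_flatten (E := E) (X := X) (U := U) (Y := Y) (c := c) hc1
    obtain ⟨cZ1, cZ2⟩ := count_flatten (E := E) (X := X) (U := U) (Y := Z) (c := c) hc1
    refine ⟨?_, by rw [cY2, cZ2, ihS]⟩
    rw [cY1, cZ1, ihH, hYZ]

lemma mem_gl_flatten {X U I : Finset Lit} {c : ℕ} {r' : Rule} :
    r' ∈ glReduct (unweighted (reduct (flatten (X ∩ U) (U \ X) c) I)) I ↔
      ((U \ X) ∩ I = ∅ ∧
        ((Sat I (fwr1 (X ∩ U) (U \ X) c).r ∧ r' = ⟨∅, X ∩ U ∪ {Lit.pos c}, ∅⟩) ∨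
         (Sat I (fwr2 (X ∩ U) (U \ X) c).r ∧ r' = ⟨{Lit.pos c}, X ∩ U, ∅⟩))) := by
  rw [mem_gl]
  constructor
  · rintro ⟨wr, hwr, hsat, hneg, rfl⟩
    rw [flatten_eq] at hwr
    rcases Finset.mem_insert.1 hwr with rfl | hwr
    · exact ⟨hneg, Or.inl ⟨hsat, rfl⟩⟩
    · rw [Finset.mem_singleton.1 hwr] at hsat hneg ⊢
      exact ⟨hneg, Or.inr ⟨hsat, rfl⟩⟩
  · rintro ⟨hneg, (⟨hsat, rfl⟩ | ⟨hsat, rfl⟩)⟩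
    · exact ⟨fwr1 _ _ _, by rw [flatten_eq]; exact Finset.mem_insert_self _ _, hsat, hneg, rfl⟩
    · exact ⟨fwr2 _ _ _,
        by rw [flatten_eq]; exact Finset.mem_insert_of_mem (Finset.mem_singleton_self _),
        hsat, hneg, rfl⟩

lemma gl_lits {E : Program} {I : Finset Lit} {r' : Rule}
    (h : r' ∈ glReduct (unweighted (reduct E I)) I) : r'.lits ⊆ litset E := by
  obtain ⟨wr, hwr, _, _, rfl⟩ := mem_gl.1 h
  intro l hl
  simp only [Rule.lits, Finset.mem_union, Finset.notMem_empty, or_false] at hl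
  apply lits_subset_litset hwr
  rcases hl with h | h
  exacts [head_subset_lits _ h, pos_subset_lits _ h]

lemma K1a {E : Program} {X U I : Finset Lit} {c : ℕ}
    (hcI : Lit.pos c ∉ I)
    (h : Stable (E ∪ flatten (X ∩ U) (U \ X) c) I) : Stable E I := by
  obtain ⟨hcons, hsat, hmin⟩ := h
  refine ⟨hcons, satProg_glReduct_self, ?_⟩
  intro J hJ hJsat
  refine hmin J hJ ?_
  intro r' hr'
  rw [gl_union] at hr'
  rcases Finset.mem_union.1 hr' with hr' | hr'
  · exact hJsat r' hr'
  · rcases mem_gl_flatten.1 hr' with ⟨hneg, (⟨hs1, rfl⟩ | ⟨hs2, rfl⟩)⟩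
    · intro hpos _
      exact (hcI (hJ.subset
        (hpos (Finset.mem_union_right _ (Finset.mem_singleton_self _))))).elim
    · intro hpos _
      exfalso
      have hXI : X ∩ U ⊆ I := hpos.trans hJ.subset
      exact hcI (sat_fwr2_iff.1 hs2 (key_inter.1 ⟨hXI, hneg⟩))

lemma K1b {E : Program} {X U I : Finset Lit} {c : ℕ}
    (h : Stable E I) : Stable (E ∪ flatten (X ∩ U) (U \ X) c) I := by
  refine ⟨h.1, satProg_glReduct_self, ?_⟩
  intro J hJ hJsat
  refine h.2.2 J hJ ?_
  intro r' hr'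
  exact hJsat r' (by rw [gl_union]; exact Finset.mem_union_left _ hr')

lemma K2 {E : Program} {X U Y : Finset Lit} {c : ℕ}
    (hc1 : Lit.pos c ∉ litset E) (hc2 : Lit.neg c ∉ litset E) (hU : U ⊆ litset E)
    (hY : Stable E Y) (hYX : Y ∩ U = X ∩ U) :
    Stable (E ∪ flatten (X ∩ U) (U \ X) c) (Y ∪ {Lit.pos c}) := by
  set I := Y ∪ {Lit.pos c} with hI
  have hYlit : Y ⊆ litset E := stable_subset_litset hY
  have hcY : Lit.pos c ∉ Y := fun hm => hc1 (hYlit hm)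
  have hnY : Lit.neg c ∉ Y := fun hm => hc2 (hYlit hm)
  have hcU : Lit.pos c ∉ U := fun hm => hc1 (hU hm)
  have hagree : ∀ l ∈ litset E, (l ∈ I ↔ l ∈ Y) := by
    intro l hl
    have hlc : l ≠ Lit.pos c := fun e => hc1 (e ▸ hl)
    rw [hI, Finset.mem_union, Finset.mem_singleton]
    constructor
    · rintro (h | rfl)
      · exact h
      · exact absurd rfl hlc
    · exact Or.inl
  have hglE : glReduct (unweighted (reduct E I)) I = glReduct (unweighted (reduct E Y)) Y :=
    gl_congr hagree
  have hcI : Lit.pos c ∈ I := Finset.mem_union_right _ (Finset.mem_singleton_self _)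
  have hIU : I ∩ U = X ∩ U := by
    rw [← hYX]
    ext l
    simp only [Finset.mem_inter, hI, Finset.mem_union, Finset.mem_singleton]
    constructor
    · rintro ⟨h | rfl, hU'⟩
      exacts [⟨h, hU'⟩, absurd hU' hcU]
    · rintro ⟨h, hU'⟩
      exact ⟨Or.inl h, hU'⟩
  have hr2mem : (⟨{Lit.pos c}, X ∩ U, ∅⟩ : Rule)
      ∈ glReduct (unweighted (reduct (E ∪ flatten (X ∩ U) (U \ X) c) I)) I := by
    rw [gl_union]
    exact Finset.mem_union_right _ (mem_gl_flatten.2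
      ⟨(key_inter.2 hIU).2, Or.inr ⟨sat_fwr2_iff.2 fun _ => hcI, rfl⟩⟩)
  refine ⟨?_, satProg_glReduct_self, ?_⟩
  · intro l hl
    rcases Finset.mem_union.1 hl with hlY | hlc
    · intro hcm
      rcases Finset.mem_union.1 hcm with h2 | h2
      · exact hY.1 l hlY h2
      · rw [Finset.mem_singleton] at h2
        cases l with
        | pos a => exact absurd h2 (by simp [Lit.compl])
        | neg a =>
          simp only [Lit.compl, Lit.pos.injEq] at h2
          subst h2
          exact hnY hlY
    · rw [Finset.mem_singleton.1 hlc]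
      intro hcm
      rcases Finset.mem_union.1 hcm with h2 | h2
      · exact hnY h2
      · rw [Finset.mem_singleton] at h2
        exact absurd h2 (by simp [Lit.compl])
  · intro J hJ hJsat
    by_cases hcJ : Lit.pos c ∈ J
    · have hJ'sub : J.erase (Lit.pos c) ⊆ Y := by
        intro l hl
        obtain ⟨hne, hlJ⟩ := Finset.mem_erase.1 hl
        rcases Finset.mem_union.1 (hJ.subset hlJ) with h | h
        · exact h
        · exact absurd (Finset.mem_singleton.1 h) hne
      have hne : J.erase (Lit.pos c) ≠ Y := by
        intro he
        apply hJ.ne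
        have hJi : J = insert (Lit.pos c) (J.erase (Lit.pos c)) := (Finset.insert_erase hcJ).symm
        rw [hJi, he, hI, Finset.union_comm, ← Finset.insert_eq]
      refine hY.2.2 (J.erase (Lit.pos c)) (Finset.ssubset_iff_subset_ne.2 ⟨hJ'sub, hne⟩) ?_
      intro r' hr'
      have hr'lits := gl_lits hr'
      have hsatJ : Sat J r' :=
        hJsat r' (by rw [gl_union, hglE]; exact Finset.mem_union_left _ hr')
      refine (sat_congr ?_).1 hsatJ
      intro l hl
      have hlc : l ≠ Lit.pos c := fun e => hc1 (e ▸ hr'lits hl)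
      constructor
      · intro hm
        exact Finset.mem_erase.2 ⟨hlc, hm⟩
      · exact Finset.mem_of_mem_erase
    · have hJY : J ⊆ Y := by
        intro l hl
        rcases Finset.mem_union.1 (hJ.subset hl) with h | h
        · exact h
        · rw [Finset.mem_singleton.1 h] at hl
          exact absurd hl hcJ
      by_cases hJeq : J = Y
      · have hs := hJsat _ hr2mem
        have hXJ : X ∩ U ⊆ J := by
          rw [hJeq, ← hYX]
          exact Finset.inter_subset_left
        obtain ⟨x, hx⟩ := hs hXJ (Finset.empty_inter J)
        obtain ⟨hx1, hx2⟩ := Finset.mem_inter.1 hx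
        rw [Finset.mem_singleton.1 hx1] at hx2
        exact absurd hx2 hcJ
      · refine hY.2.2 J (Finset.ssubset_iff_subset_ne.2 ⟨hJY, hJeq⟩) ?_
        intro r' hr'
        exact hJsat r' (by rw [gl_union, hglE]; exact Finset.mem_union_left _ hr')

lemma K3 {E : Program} {X U I : Finset Lit} {c : ℕ}
    (hc1 : Lit.pos c ∉ litset E) (hU : U ⊆ litset E)
    (h : Stable (E ∪ flatten (X ∩ U) (U \ X) c) I) (hcI : Lit.pos c ∈ I) :
    Stable E (I.erase (Lit.pos c)) ∧ (I.erase (Lit.pos c)) ∩ U = X ∩ U ∧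
      I = I.erase (Lit.pos c) ∪ {Lit.pos c} := by
  obtain ⟨hcons, hsat, hmin⟩ := h
  have hcU : Lit.pos c ∉ U := fun hm => hc1 (hU hm)
  set Y := I.erase (Lit.pos c) with hYdef
  have hagree : ∀ l ∈ litset E, (l ∈ I ↔ l ∈ Y) := by
    intro l hl
    have hlc : l ≠ Lit.pos c := fun e => hc1 (e ▸ hl)
    constructor
    · intro hm
      exact Finset.mem_erase.2 ⟨hlc, hm⟩
    · exact Finset.mem_of_mem_erase
  have hglE : glReduct (unweighted (reduct E I)) I = glReduct (unweighted (reduct E Y)) Y :=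
    gl_congr hagree
  have hYss : Y ⊂ I := Finset.erase_ssubset hcI
  have hIU : I ∩ U = X ∩ U := by
    by_contra hne
    refine hmin Y hYss ?_
    intro r' hr'
    rw [gl_union] at hr'
    rcases Finset.mem_union.1 hr' with hr' | hr'
    · have hsatI : Sat I r' := hsat r' (by rw [gl_union]; exact Finset.mem_union_left _ hr')
      have hr'lits := gl_lits hr'
      exact (sat_congr fun l hl => hagree l (hr'lits hl)).1 hsatI
    · rcases mem_gl_flatten.1 hr' with ⟨hneg, (⟨hs1, rfl⟩ | ⟨hs2, rfl⟩)⟩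
      · intro hpos _
        exfalso
        have : Lit.pos c ∈ Y := hpos (Finset.mem_union_right _ (Finset.mem_singleton_self _))
        exact (Finset.mem_erase.1 this).1 rfl
      · intro hpos _
        exfalso
        exact hne (key_inter.1 ⟨hpos.trans (Finset.erase_subset _ _), hneg⟩)
  have hYU : Y ∩ U = X ∩ U := by
    rw [← hIU]
    ext l
    simp only [Finset.mem_inter, hYdef, Finset.mem_erase]
    constructor
    · rintro ⟨⟨_, h1⟩, h2⟩
      exact ⟨h1, h2⟩
    · rintro ⟨h1, h2⟩
      exact ⟨⟨fun e => hcU (e ▸ h2), h1⟩, h2⟩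
  refine ⟨⟨consistent_of_subset (Finset.erase_subset _ _) hcons, satProg_glReduct_self, ?_⟩,
    hYU, ?_⟩
  · intro J hJ hJsat
    have hcJ : Lit.pos c ∉ J := fun hm => (Finset.mem_erase.1 (hJ.subset hm)).1 rfl
    have hJ'I : insert (Lit.pos c) J ⊂ I := by
      refine Finset.ssubset_iff_subset_ne.2 ⟨?_, ?_⟩
      · intro l hl
        rcases Finset.mem_insert.1 hl with rfl | hl
        · exact hcI
        · exact Finset.mem_of_mem_erase (hJ.subset hl)
      · intro he
        apply hJ.ne
        rw [← Finset.erase_insert hcJ, he]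
    refine hmin (insert (Lit.pos c) J) hJ'I ?_
    intro r' hr'
    rw [gl_union] at hr'
    rcases Finset.mem_union.1 hr' with hr' | hr'
    · rw [hglE] at hr'
      have hr'lits := gl_lits hr'
      have hsJ : Sat J r' := hJsat r' hr'
      refine (sat_congr ?_).2 hsJ
      intro l hl
      have hlc : l ≠ Lit.pos c := fun e => hc1 (e ▸ hr'lits hl)
      rw [Finset.mem_insert]
      constructor
      · rintro (rfl | hm)
        · exact absurd rfl hlc
        · exact hm
      · exact Or.inr
    · rcases mem_gl_flatten.1 hr' with ⟨hneg, (⟨hs1, rfl⟩ | ⟨hs2, rfl⟩)⟩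
      · exact absurd ⟨hIU, hcI⟩ (sat_fwr1_iff.1 hs1)
      · intro _ _
        exact ⟨Lit.pos c,
          Finset.mem_inter.2 ⟨Finset.mem_singleton_self _, Finset.mem_insert_self _ _⟩⟩
  · ext l
    simp only [Finset.mem_union, Finset.mem_singleton, hYdef, Finset.mem_erase]
    constructor
    · intro hl
      by_cases hlc : l = Lit.pos c
      · exact Or.inr hlc
      · exact Or.inl ⟨hlc, hl⟩
    · rintro (⟨_, hl⟩ | rfl)
      exacts [hl, hcI]

/-- For an LPMLN program `P`, a set `U` of literals with `lit(P) ⊆ U`, and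
a flattening extension `E^{k+1}(P,U) = E^k(P,U) ∪ R(X ∩ U, U − X, c)` built from a
probabilistic stable model `X` of `E^k(P,U)` and a fresh atom `c`:
(1) `SM(E⁰(P,U))` is exactly the set of consistent subsets of `U`;
(2) `SM(E^{k+1}(P,U)) = SM(E^k(P,U)) ∪ {Y ∪ {c} | Y ∈ SM(E^k(P,U)), Y ∩ U = X ∩ U}`;
(3) `W(E^{k+1}(P,U), Y)` equals `W(E^k(P,U), Y)·e^{2α}` if `Y ∩ U ≠ X ∩ U` and equals
`W(E^k(P,U), Y)·e^{α}` otherwise; and for any two stable models `Y`, `Z` of `E^i(P,U)`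
with `i > 0`, if `Y ∩ U = Z ∩ U` then `W(E^i(P,U), Y) = W(E^i(P,U), Z)`. -/
theorem flattening_extension_prop (P : Program) (U : Finset Lit) (hPU : litset P ⊆ U)
    (k : ℕ) (E : Program) (X : Finset Lit) (c : ℕ)
    (hE : IsFlatExt P U k E) (hX : PStable E X)
    (hc1 : Lit.pos c ∉ litset E) (hc2 : Lit.neg c ∉ litset E) :
    (∀ I, Stable (E0 P U) I ↔ (Consistent I ∧ I ⊆ U)) ∧
    (∀ I, Stable (E ∪ flatten (X ∩ U) (U \ X) c) I ↔
      (Stable E I ∨ ∃ Y, Stable E Y ∧ Y ∩ U = X ∩ U ∧ I = Y ∪ {Lit.pos c})) ∧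
    (∀ Y, Consistent Y →
      (Y ∩ U ≠ X ∩ U →
        hardCount (E ∪ flatten (X ∩ U) (U \ X) c) Y = hardCount E Y + 2 ∧
        softWeight (E ∪ flatten (X ∩ U) (U \ X) c) Y = softWeight E Y) ∧
      (Y ∩ U = X ∩ U →
        hardCount (E ∪ flatten (X ∩ U) (U \ X) c) Y = hardCount E Y + 1 ∧
        softWeight (E ∪ flatten (X ∩ U) (U \ X) c) Y = softWeight E Y)) ∧
    (∀ i > 0, ∀ F : Program, IsFlatExt P U i F →
      ∀ Y Z, Stable F Y → Stable F Z → Y ∩ U = Z ∩ U →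
        hardCount F Y = hardCount F Z ∧ softWeight F Y = softWeight F Z) := by
  have hU : U ⊆ litset E := U_subset_litset hE
  refine ⟨stable_E0 hPU, ?_, ?_, ?_⟩
  · intro I
    constructor
    · intro h
      by_cases hcI : Lit.pos c ∈ I
      · obtain ⟨hS, hYU, hIeq⟩ := K3 hc1 hU h hcI
        exact Or.inr ⟨_, hS, hYU, hIeq⟩
      · exact Or.inl (K1a hcI h)
    · rintro (h | ⟨Y, hS, hYU, rfl⟩)
      · exact K1b h
      · exact K2 hc1 hc2 hU hS hYU
  · intro Y _
    obtain ⟨hH, hS⟩ := count_flatten (E := E) (X := X) (U := U) (Y := Y) (c := c) hc1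
    refine ⟨fun hne => ⟨?_, hS⟩, fun heq => ⟨?_, hS⟩⟩
    · rw [hH, if_neg hne]
    · rw [hH, if_pos heq]
  · intro i _ F hF Y Z _ _ hYZ
    exact lemB hPU hF Y Z hYZ


end LPMLN
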